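/- Let g:[0,1]→ℝ be concave with g(0) = lim_{x→0⁺} g(x) = 0, and suppose g is subderivative, i.e. g(xy) ≤ x·g(y) + y·g(x) for all x,y ∈ [0,1]. Then limsup_{x→0⁺} g(x)/η(x) < ∞, where η(x) = −x log₂ x. -/

import Mathlib

/-!
Concavity and `g 0 = 0` make `g x / x` antitone, while subderivativity at `1/2` gives
`g (y/2) / (y/2) ≤ g y / y + 2 g (1/2)`. Iterating along `x = 2⁻ⁿ` shows that `g x / x` grows at most
like `2 g (1/2) log₂ (1/x)`, and dividing by `log₂ (1/x) = η x / x` bounds `g / η` near `0⁺`.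
-/

open Filter Set

/-- The Shannon function `η(x) = −x·log₂ x`. -/
noncomputable def shannonF : ℝ → ℝ := fun x => -(x * Real.logb 2 x)

theorem ConcaveOn.div_le_div_of_map_zero {𝕜 : Type*} [Field 𝕜] [LinearOrder 𝕜]
    [IsStrictOrderedRing 𝕜] {s : Set 𝕜} {g : 𝕜 → 𝕜} (hg : ConcaveOn 𝕜 s g) (h0 : 0 ∈ s)
    (hg0 : g 0 = 0) {t x : 𝕜} (ht : t ∈ s) (hx : x ∈ s) (ht0 : 0 < t) (htx : t ≤ x) :
    g x / x ≤ g t / t := by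
  simpa [slope_def_field, hg0] using
    hg.antitoneOn_slope_gt h0 ⟨ht, ht0⟩ ⟨hx, ht0.trans_le htx⟩ htx

section Subderivative

variable {g : ℝ → ℝ}
  (hsub : ∀ x ∈ Icc (0 : ℝ) 1, ∀ y ∈ Icc (0 : ℝ) 1, g (x * y) ≤ x * g y + y * g x)
include hsub

theorem map_one_nonneg_of_subderivative : 0 ≤ g 1 := by
  have h := hsub 1 (by norm_num) 1 (by norm_num)
  rw [mul_one, one_mul] at h
  linarith

theorem map_half_nonneg_of_subderivative (hconc : ConcaveOn ℝ (Icc 0 1) g) (hg0 : g 0 = 0) :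
    0 ≤ g (1 / 2) := by
  have h := hconc.div_le_div_of_map_zero (by norm_num) hg0 (t := 1 / 2) (x := 1)
    (by norm_num) (by norm_num) (by norm_num) (by norm_num)
  linarith [map_one_nonneg_of_subderivative hsub]

theorem div_half_le_of_subderivative {y : ℝ} (hy : y ∈ Icc (0 : ℝ) 1) (hy0 : 0 < y) :
    g (y / 2) / (y / 2) ≤ g y / y + 2 * g (1 / 2) := by
  have h := hsub (1 / 2) (by norm_num) y hy
  rw [one_div_mul_eq_div] at h
  rw [div_le_iff₀ (by positivity)]
  field_simp
  linarith

theorem div_half_pow_le_of_subderivative (n : ℕ) :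
    g ((1 / 2) ^ n) / (1 / 2) ^ n ≤ g 1 + 2 * g (1 / 2) * n := by
  induction n with
  | zero => simp
  | succ n ih =>
    have hmem : ((1 : ℝ) / 2) ^ n ∈ Icc (0 : ℝ) 1 :=
      ⟨by positivity, pow_le_one₀ (by norm_num) (by norm_num)⟩
    have h := div_half_le_of_subderivative hsub hmem (by positivity)
    rw [pow_succ, ← div_eq_mul_one_div]
    push_cast
    linarith

theorem div_le_logb_of_subderivative (hconc : ConcaveOn ℝ (Icc 0 1) g) (hg0 : g 0 = 0) {x : ℝ}
    (hx0 : 0 < x) (hx1 : x ≤ 1) :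
    g x / x ≤ g 1 + 2 * g (1 / 2) * (Real.logb 2 x⁻¹ + 1) := by
  have hhalf := map_half_nonneg_of_subderivative hsub hconc hg0
  obtain ⟨n, hn, hn'⟩ := exists_nat_pow_near (one_le_inv₀ hx0 |>.mpr hx1) one_lt_two
  have hn_le : (n : ℝ) ≤ Real.logb 2 x⁻¹ := by
    simpa [Real.logb_pow] using Real.logb_le_logb_of_le one_lt_two (by positivity) hn
  have hpow_le : ((1 : ℝ) / 2) ^ (n + 1) ≤ x := by
    rw [one_div, inv_pow]
    exact (inv_le_comm₀ (by positivity) hx0).mpr hn'.le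
  calc g x / x ≤ g ((1 / 2) ^ (n + 1)) / (1 / 2) ^ (n + 1) :=
        hconc.div_le_div_of_map_zero (by norm_num) hg0
          ⟨by positivity, pow_le_one₀ (by norm_num) (by norm_num)⟩ ⟨hx0.le, hx1⟩
          (by positivity) hpow_le
    _ ≤ g 1 + 2 * g (1 / 2) * (n + 1 : ℕ) := div_half_pow_le_of_subderivative hsub (n + 1)
    _ ≤ g 1 + 2 * g (1 / 2) * (Real.logb 2 x⁻¹ + 1) := by
        push_cast
        gcongr

end Subderivative

theorem shannonF_eq_mul_logb_inv (x : ℝ) : shannonF x = x * Real.logb 2 x⁻¹ := by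
  simp [shannonF, Real.logb_inv]

theorem statement18_general (g : ℝ → ℝ) (hconc : ConcaveOn ℝ (Set.Icc 0 1) g) (hg0 : g 0 = 0)
    (hsub : ∀ x ∈ Set.Icc (0 : ℝ) 1, ∀ y ∈ Set.Icc (0 : ℝ) 1,
      g (x * y) ≤ x * g y + y * g x) :
    ∃ C : ℝ, ∀ᶠ x in nhdsWithin 0 (Set.Ioi (0 : ℝ)), g x / shannonF x ≤ C := by
  refine ⟨g 1 + 4 * g (1 / 2), ?_⟩
  filter_upwards [Ioo_mem_nhdsGT (show (0 : ℝ) < 1 / 2 by norm_num)] with x ⟨hx0, hx2⟩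
  set L := Real.logb 2 x⁻¹
  have hL : 1 ≤ L := by
    rw [← Real.logb_self_eq_one one_lt_two]
    exact Real.logb_le_logb_of_le one_lt_two two_pos
      ((le_inv_comm₀ two_pos hx0).mpr (by linarith))
  have hbound := div_le_logb_of_subderivative hsub hconc hg0 hx0 (by linarith)
  have hg1 := map_one_nonneg_of_subderivative hsub
  have hhalf := map_half_nonneg_of_subderivative hsub hconc hg0
  calc g x / shannonF x = g x / x / L := by rw [shannonF_eq_mul_logb_inv, div_div]
    _ ≤ (g 1 + 2 * g (1 / 2) * (L + 1)) / L := by gcongr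
    _ ≤ g 1 + 4 * g (1 / 2) := by
        rw [div_le_iff₀ (by linarith)]
        nlinarith

/-- If an entropy function `g` is subderivative, i.e. `g(xy) ≤ x·g(y) + y·g(x)` for all
`x, y ∈ [0,1]`, then `limsup_{x→0⁺} g(x)/η(x) < ∞`, i.e. `g(x)/η(x)` is bounded above
near `0⁺`. -/
theorem statement18 (g : ℝ → ℝ) (hconc : ConcaveOn ℝ (Set.Icc 0 1) g) (hg0 : g 0 = 0)
    (hg0' : Tendsto g (nhdsWithin 0 (Set.Ioi 0)) (nhds 0))
    (hsub : ∀ x ∈ Set.Icc (0 : ℝ) 1, ∀ y ∈ Set.Icc (0 : ℝ) 1,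
      g (x * y) ≤ x * g y + y * g x) :
    ∃ C : ℝ, ∀ᶠ x in nhdsWithin 0 (Set.Ioi (0 : ℝ)), g x / shannonF x ≤ C :=
  statement18_general g hconc hg0 hsub
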